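/- Completeness of AX^b for rooted branching bisimilarity on the minimal process language: for all processes E, F, E ≈_rb F if and only if the axioms A1–A4 and B prove E = F. -/

import Mathlib

namespace NDB

/-- The minimal process language `E ::= 0 | α.E | E + E`. -/
inductive NE (Act : Type) : Type where
  | zero : NE Act
  | pre : Act → NE Act → NE Act
  | plus : NE Act → NE Act → NE Act

variable {Act : Type}

/-- The SOS transition relation. -/
inductive step : NE Act → Act → NE Act → Prop where
  | pre (α : Act) (E : NE Act) : step (.pre α E) α E
  | left {E₁ E₂ : NE Act} {α : Act} {E' : NE Act} :
      step E₁ α E' → step (.plus E₁ E₂) α E'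
  | right {E₁ E₂ : NE Act} {α : Act} {E' : NE Act} :
      step E₂ α E' → step (.plus E₁ E₂) α E'

variable (τ : Act)

/-- `E →(α) E'` : a transition, or a vacuous step when `α = τ`. -/
def opt (E : NE Act) (α : Act) (E' : NE Act) : Prop :=
  step E α E' ∨ (α = τ ∧ E' = E)

/-- `E ⟹ E'` : the reflexive-transitive closure of `→(τ)`. -/
def wk : NE Act → NE Act → Prop :=
  Relation.ReflTransGen (fun E E' => opt τ E τ E')

/-- Branching bisimulation relations. -/
def IsBB (R : NE Act → NE Act → Prop) : Prop :=
  Symmetric R ∧ ∀ E F α E', R E F → step E α E' →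
    ∃ F₁ F₂, wk τ F F₁ ∧ opt τ F₁ α F₂ ∧ R E F₁ ∧ R E' F₂

/-- Branching bisimilarity `≈_b`. -/
def bb (E F : NE Act) : Prop := ∃ R, IsBB τ R ∧ R E F

/-- Rooted branching bisimilarity `≈_rb`. -/
def rbb (E F : NE Act) : Prop :=
  (∀ α E', step E α E' → ∃ F', step F α F' ∧ bb τ E' F') ∧
  (∀ α F', step F α F' → ∃ E', step E α E' ∧ bb τ E' F')

/-- Strong bisimulation relations. -/
def IsSB (R : NE Act → NE Act → Prop) : Prop :=
  Symmetric R ∧ ∀ E F α E', R E F → step E α E' →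
    ∃ F', step F α F' ∧ R E' F'

/-- Strong bisimilarity `∼`. -/
def sb (E F : NE Act) : Prop := ∃ R, IsSB R ∧ R E F

/-- `reach E E'` : `E'` is a derivative of `E`. -/
def reach : NE Act → NE Act → Prop :=
  Relation.ReflTransGen (fun E E' => ∃ α, step E α E')

/-- A process is concrete iff no derivative has an inert `τ`-transition. -/
def Concrete (E : NE Act) : Prop :=
  ∀ E', reach E E' → ∀ E'', step E' τ E'' → ¬ bb τ E' E''

/-- Provable equality in the theory `AX^b` (axioms A1–A4 and B). -/
inductive AXb (τ : Act) : NE Act → NE Act → Prop where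
  | refl (E) : AXb τ E E
  | symm {E F} : AXb τ E F → AXb τ F E
  | trans {E F G} : AXb τ E F → AXb τ F G → AXb τ E G
  | congPre (α : Act) {E F} : AXb τ E F → AXb τ (.pre α E) (.pre α F)
  | congPlusL {E E' F} : AXb τ E E' → AXb τ (.plus E F) (.plus E' F)
  | congPlusR {E F F'} : AXb τ F F' → AXb τ (.plus E F) (.plus E F')
  | A1 (E F) : AXb τ (.plus E F) (.plus F E)
  | A2 (E F G) : AXb τ (.plus (.plus E F) G) (.plus E (.plus F G))
  | A3 (E) : AXb τ (.plus E E) E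
  | A4 (E) : AXb τ (.plus E .zero) E
  | B (α : Act) (E F) :
      AXb τ (.pre α (.plus F (.pre τ (.plus E F)))) (.pre α (.plus E F))

/-!
Soundness is a routine check that `≈_rb` is a congruence validating each axiom. For
completeness, call a process concrete if none of its derivatives has an inert `τ`-step.
On concrete processes `≈_b` coincides with strong bisimilarity, for which A1–A4 alone are
complete. Every `α.G` is provably equal to `α.K` with `K` concrete: after normalizing the
derivatives of `G`, an inert root step `G →τ K₀` with `G ≈_b K₀` forces every summand of `G`
to be either absorbed by `K₀` or equal to `τ.K₀`, so `G = S + τ.K₀` with `K₀ + S = K₀`,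
and axiom B gives `α.(S + τ.(K₀ + S)) = α.(K₀ + S) = α.K₀`. Two rooted branching bisimilar
processes whose derivatives are concrete then absorb each other summand by summand.
The summands `β.H` of a process are addressed through its transitions `→β H`.
-/

open Relation

section

variable {τ}

theorem not_step_zero {α : Act} {X : NE Act} : ¬ step .zero α X := nofun

theorem step_plus_iff {E F X : NE Act} {α : Act} :
    step (E.plus F) α X ↔ step E α X ∨ step F α X :=
  ⟨fun | .left h => .inl h | .right h => .inr h, fun | .inl h => .left h | .inr h => .right h⟩

theorem wellFounded_step : WellFounded fun E' E : NE Act => ∃ α, step E α E' := by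
  refine ⟨fun E => ?_⟩
  induction E with
  | zero => exact ⟨_, fun _ ⟨_, h⟩ => nomatch h⟩
  | pre β E ih => exact ⟨_, fun _ ⟨_, h⟩ => by cases h; exact ih⟩
  | plus E F ihE ihF =>
    refine ⟨_, fun X ⟨α, h⟩ => ?_⟩
    rcases step_plus_iff.1 h with h | h
    exacts [ihE.inv ⟨α, h⟩, ihF.inv ⟨α, h⟩]

instance : Trans (AXb τ) (AXb τ) (AXb τ) := ⟨AXb.trans⟩

theorem AXb.plus_congr {E E' F F' : NE Act} (hE : AXb τ E E') (hF : AXb τ F F') :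
    AXb τ (E.plus F) (E'.plus F') :=
  (AXb.congPlusL hE).trans (AXb.congPlusR hF)

theorem AXb.plus_left_comm (E F G : NE Act) :
    AXb τ (E.plus (F.plus G)) (F.plus (E.plus G)) :=
  calc AXb τ (E.plus (F.plus G)) ((E.plus F).plus G) := (AXb.A2 _ _ _).symm
    AXb τ _ ((F.plus E).plus G) := AXb.congPlusL (AXb.A1 _ _)
    AXb τ _ (F.plus (E.plus G)) := AXb.A2 _ _ _

theorem AXb.plus_right_comm (E F G : NE Act) :
    AXb τ ((E.plus F).plus G) ((E.plus G).plus F) :=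
  calc AXb τ ((E.plus F).plus G) (E.plus (F.plus G)) := AXb.A2 _ _ _
    AXb τ _ (E.plus (G.plus F)) := AXb.congPlusR (AXb.A1 _ _)
    AXb τ _ ((E.plus G).plus F) := (AXb.A2 _ _ _).symm

theorem AXb.zero_plus (E : NE Act) : AXb τ (NE.zero.plus E) E :=
  (AXb.A1 _ _).trans (AXb.A4 _)

theorem AXb.absorb_of_step {F H H' : NE Act} {β : Act} (hs : step F β H') (h : AXb τ H H') :
    AXb τ (F.plus (.pre β H)) F := by
  suffices AXb τ (F.plus (.pre β H')) F from (AXb.congPlusR (AXb.congPre β h)).trans this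
  clear h
  induction hs with
  | pre => exact AXb.A3 _
  | left _ ih => exact (AXb.plus_right_comm _ _ _).trans (AXb.congPlusL ih)
  | right _ ih => exact (AXb.A2 _ _ _).trans (AXb.congPlusR ih)

theorem AXb.absorb_of_forall_step {E F : NE Act}
    (h : ∀ β H, step E β H → AXb τ (F.plus (.pre β H)) F) : AXb τ (F.plus E) F := by
  induction E with
  | zero => exact AXb.A4 _
  | pre β H => exact h β H (.pre β H)
  | plus E₁ E₂ ih₁ ih₂ =>
    calc AXb τ (F.plus (E₁.plus E₂)) ((F.plus E₁).plus E₂) := (AXb.A2 _ _ _).symm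
      AXb τ _ (F.plus E₂) := AXb.congPlusL (ih₁ fun β H hs => h β H (.left hs))
      AXb τ _ F := ih₂ fun β H hs => h β H (.right hs)

theorem AXb.absorb_of_simulation {E F : NE Act}
    (h : ∀ β H, step E β H → ∃ H', step F β H' ∧ AXb τ H H') : AXb τ (F.plus E) F :=
  AXb.absorb_of_forall_step fun β H hs =>
    let ⟨_, hs', hH⟩ := h β H hs
    AXb.absorb_of_step hs' hH

theorem AXb.of_simulations {E F : NE Act}
    (h₁ : ∀ β H, step E β H → ∃ H', step F β H' ∧ AXb τ H H')
    (h₂ : ∀ β H', step F β H' → ∃ H, step E β H ∧ AXb τ H' H) : AXb τ E F :=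
  calc AXb τ E (E.plus F) := (AXb.absorb_of_simulation h₂).symm
    AXb τ _ (F.plus E) := AXb.A1 _ _
    AXb τ _ F := AXb.absorb_of_simulation h₁

theorem AXb.exists_split {K T S : NE Act}
    (h : ∀ β H, step S β H → AXb τ (K.plus (.pre β H)) K ∨ AXb τ (.pre β H) T) :
    ∃ S', AXb τ (K.plus S') K ∧ AXb τ (S.plus T) (S'.plus T) := by
  induction S with
  | zero => exact ⟨.zero, AXb.A4 _, AXb.refl _⟩
  | pre β H =>
    rcases h β H (.pre β H) with hK | hT
    · exact ⟨_, hK, AXb.refl _⟩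
    · exact ⟨.zero, AXb.A4 _,
        ((AXb.congPlusL hT).trans (AXb.A3 _)).trans (AXb.zero_plus _).symm⟩
  | plus S₁ S₂ ih₁ ih₂ =>
    obtain ⟨S₁', hK₁, hT₁⟩ := ih₁ fun β H hs => h β H (.left hs)
    obtain ⟨S₂', hK₂, hT₂⟩ := ih₂ fun β H hs => h β H (.right hs)
    refine ⟨S₁'.plus S₂', ?_, ?_⟩
    · calc AXb τ (K.plus (S₁'.plus S₂')) ((K.plus S₁').plus S₂') := (AXb.A2 _ _ _).symm
        AXb τ _ (K.plus S₂') := AXb.congPlusL hK₁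
        AXb τ _ K := hK₂
    · calc AXb τ ((S₁.plus S₂).plus T) (S₁.plus (S₂'.plus T)) :=
            (AXb.A2 _ _ _).trans (AXb.congPlusR hT₂)
        AXb τ _ (S₂'.plus (S₁'.plus T)) :=
            (AXb.plus_left_comm _ _ _).trans (AXb.congPlusR hT₁)
        AXb τ _ ((S₁'.plus S₂').plus T) :=
            (AXb.plus_left_comm _ _ _).trans (AXb.A2 _ _ _).symm

/-! ### Branching bisimilarity -/

theorem bb_of_bisim_up_to {R : NE Act → NE Act → Prop} (hR : Symmetric R)
    (hstep : ∀ E F α E', R E F → step E α E' → ∃ F₁ F₂, wk τ F F₁ ∧ opt τ F₁ α F₂ ∧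
      (R E F₁ ∨ bb τ E F₁) ∧ (R E' F₂ ∨ bb τ E' F₂))
    {E F : NE Act} (h : R E F) : bb τ E F := by
  refine ⟨fun X Y => R X Y ∨ bb τ X Y, ⟨?_, ?_⟩, .inl h⟩
  · rintro X Y (h | ⟨S, hS, h⟩)
    exacts [.inl (hR h), .inr ⟨S, hS, hS.1 h⟩]
  · rintro X Y α X' (h | ⟨S, hS, h⟩) hs
    · exact hstep X Y α X' h hs
    · obtain ⟨Y₁, Y₂, hw, ho, h₁, h₂⟩ := hS.2 X Y α X' h hs
      exact ⟨Y₁, Y₂, hw, ho, .inr ⟨S, hS, h₁⟩, .inr ⟨S, hS, h₂⟩⟩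

theorem bb_refl (E : NE Act) : bb τ E E :=
  bb_of_bisim_up_to (R := Eq) (fun _ _ => Eq.symm)
    (fun _ F _ E' h hs => ⟨F, E', ReflTransGen.refl, .inl (h ▸ hs), .inl h, .inl rfl⟩) rfl

theorem bb_symm {E F : NE Act} (h : bb τ E F) : bb τ F E :=
  let ⟨R, hR, h⟩ := h
  ⟨R, hR, hR.1 h⟩

theorem bb_step {E F E' : NE Act} {α : Act} (h : bb τ E F) (hs : step E α E') :
    ∃ F₁ F₂, wk τ F F₁ ∧ opt τ F₁ α F₂ ∧ bb τ E F₁ ∧ bb τ E' F₂ := by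
  obtain ⟨R, hR, h⟩ := h
  obtain ⟨F₁, F₂, hw, ho, h₁, h₂⟩ := hR.2 E F α E' h hs
  exact ⟨F₁, F₂, hw, ho, ⟨R, hR, h₁⟩, ⟨R, hR, h₂⟩⟩

theorem bb_wk {E F E' : NE Act} (h : bb τ E F) (hw : wk τ E E') :
    ∃ F', wk τ F F' ∧ bb τ E' F' := by
  induction hw with
  | refl => exact ⟨F, .refl, h⟩
  | tail _ ho ih =>
    obtain ⟨F', hw, h⟩ := ih
    rcases ho with hs | ⟨-, rfl⟩
    · obtain ⟨F₁, F₂, hw₁, ho, -, h₂⟩ := bb_step h hs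
      exact ⟨F₂, (hw.trans hw₁).tail ho, h₂⟩
    · exact ⟨F', hw, h⟩

theorem bb_trans {E F G : NE Act} (h₁ : bb τ E F) (h₂ : bb τ F G) : bb τ E G := by
  refine ⟨fun X Z => ∃ Y, bb τ X Y ∧ bb τ Y Z, ⟨?_, ?_⟩, F, h₁, h₂⟩
  · rintro X Z ⟨Y, h₁, h₂⟩
    exact ⟨Y, bb_symm h₂, bb_symm h₁⟩
  · rintro X Z α X' ⟨Y, hXY, hYZ⟩ hs
    obtain ⟨Y₁, Y₂, hwY, hoY, hXY₁, hXY₂⟩ := bb_step hXY hs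
    obtain ⟨Z₀, hwZ, hYZ₀⟩ := bb_wk hYZ hwY
    rcases hoY with hsY | ⟨rfl, rfl⟩
    · obtain ⟨Z₁, Z₂, hwZ₁, hoZ, hYZ₁, hYZ₂⟩ := bb_step hYZ₀ hsY
      exact ⟨Z₁, Z₂, hwZ.trans hwZ₁, hoZ, ⟨Y₁, hXY₁, hYZ₁⟩, ⟨Y₂, hXY₂, hYZ₂⟩⟩
    · exact ⟨Z₀, Z₀, hwZ, .inr ⟨rfl, rfl⟩, ⟨_, hXY₁, hYZ₀⟩, ⟨_, hXY₂, hYZ₀⟩⟩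

theorem bb_stutter {P Q S : NE Act} (h : bb τ P Q) (h₁ : wk τ P S) (h₂ : wk τ S Q) :
    bb τ P S := by
  let between X Z := ∃ P Q, wk τ P Z ∧ wk τ Z Q ∧ bb τ X P ∧ bb τ X Q
  refine bb_of_bisim_up_to (R := fun X Z => between X Z ∨ between Z X)
    (fun _ _ => Or.symm) ?_ (.inl ⟨P, Q, h₁, h₂, bb_refl P, h⟩)
  rintro X Z α X' (⟨P, Q, -, hwQ, -, hQ⟩ | ⟨P, Q, hwP, -, hP, -⟩) hs
  · obtain ⟨Z₁, Z₂, hw, ho, h₁, h₂⟩ := bb_step hQ hs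
    exact ⟨Z₁, Z₂, hwQ.trans hw, ho, .inr h₁, .inr h₂⟩
  · obtain ⟨Z₀, hwZ, hXZ₀⟩ := bb_wk (bb_symm hP) hwP
    obtain ⟨Z₁, Z₂, hw, ho, h₁, h₂⟩ := bb_step hXZ₀ hs
    exact ⟨Z₁, Z₂, hwZ.trans hw, ho, .inr h₁, .inr h₂⟩

/-! ### Concrete processes -/

theorem Concrete.of_step {E E' : NE Act} {α : Act} (h : Concrete τ E) (hs : step E α E') :
    Concrete τ E' :=
  fun X hX => h X (.head ⟨α, hs⟩ hX)

theorem concrete_of_forall_step {G : NE Act} (hG : ∀ β H, step G β H → Concrete τ H)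
    (hroot : ∀ K, step G τ K → ¬ bb τ G K) : Concrete τ G := by
  intro X hX
  rcases hX.cases_head with rfl | ⟨H, ⟨β, hs⟩, hX⟩
  exacts [hroot, hG β H hs X hX]

theorem Concrete.eq_of_wk {K K' : NE Act} (hK : Concrete τ K) (hw : wk τ K K')
    (h : bb τ K K') : K' = K := by
  induction hw using ReflTransGen.head_induction_on with
  | refl => rfl
  | head ho hw ih =>
    rcases ho with hs | ⟨-, rfl⟩
    · exact absurd (bb_stutter h (.single (.inl hs)) hw) (hK _ .refl _ hs)
    · exact ih hK h

theorem Concrete.sb_of_bb {E F : NE Act} (hE : Concrete τ E) (hF : Concrete τ F)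
    (h : bb τ E F) : sb E F := by
  refine ⟨fun X Y => bb τ X Y ∧ Concrete τ X ∧ Concrete τ Y, ⟨?_, ?_⟩, h, hE, hF⟩
  · rintro X Y ⟨h, hX, hY⟩
    exact ⟨bb_symm h, hY, hX⟩
  · rintro X Y α X' ⟨h, hX, hY⟩ hs
    obtain ⟨Y₁, Y₂, hw, ho, h₁, h₂⟩ := bb_step h hs
    obtain rfl : Y₁ = Y := hY.eq_of_wk hw (bb_trans (bb_symm h) h₁)
    rcases ho with hsY | ⟨rfl, rfl⟩
    · exact ⟨Y₂, hsY, h₂, hX.of_step hs, hY.of_step hsY⟩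
    · exact absurd (bb_trans h (bb_symm h₂)) (hX X .refl X' hs)

theorem sb_symm {E F : NE Act} (h : sb E F) : sb F E :=
  let ⟨R, hR, h⟩ := h
  ⟨R, hR, hR.1 h⟩

theorem sb_step {E F E' : NE Act} {α : Act} (h : sb E F) (hs : step E α E') :
    ∃ F', step F α F' ∧ sb E' F' := by
  obtain ⟨R, hR, h⟩ := h
  obtain ⟨F', hs', h'⟩ := hR.2 E F α E' h hs
  exact ⟨F', hs', R, hR, h'⟩

theorem AXb.of_sb {E F : NE Act} (h : sb E F) : AXb τ E F := by
  induction E using wellFounded_step.induction generalizing F with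
  | _ E ih =>
    refine AXb.of_simulations (fun β H hs => ?_) (fun β H' hs' => ?_)
    · obtain ⟨H', hs', h'⟩ := sb_step h hs
      exact ⟨H', hs', ih H ⟨β, hs⟩ h'⟩
    · obtain ⟨H, hs, h'⟩ := sb_step (sb_symm h) hs'
      exact ⟨H, hs, (ih H ⟨β, hs⟩ (sb_symm h')).symm⟩

theorem Concrete.AXb_of_bb {E F : NE Act} (hE : Concrete τ E) (hF : Concrete τ F)
    (h : bb τ E F) : AXb τ E F :=
  AXb.of_sb (hE.sb_of_bb hF h)

/-! ### Soundness -/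

theorem rbb_refl (E : NE Act) : rbb τ E E :=
  ⟨fun _ E' hs => ⟨E', hs, bb_refl E'⟩, fun _ E' hs => ⟨E', hs, bb_refl E'⟩⟩

theorem rbb_symm {E F : NE Act} (h : rbb τ E F) : rbb τ F E :=
  ⟨fun α F' hs => let ⟨E', hs', h'⟩ := h.2 α F' hs; ⟨E', hs', bb_symm h'⟩,
   fun α E' hs => let ⟨F', hs', h'⟩ := h.1 α E' hs; ⟨F', hs', bb_symm h'⟩⟩

theorem rbb_trans {E F G : NE Act} (h₁ : rbb τ E F) (h₂ : rbb τ F G) : rbb τ E G := by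
  constructor
  · intro α E' hs
    obtain ⟨F', hsF, hEF⟩ := h₁.1 α E' hs
    obtain ⟨G', hsG, hFG⟩ := h₂.1 α F' hsF
    exact ⟨G', hsG, bb_trans hEF hFG⟩
  · intro α G' hs
    obtain ⟨F', hsF, hFG⟩ := h₂.2 α G' hs
    obtain ⟨E', hsE, hEF⟩ := h₁.2 α F' hsF
    exact ⟨E', hsE, bb_trans hEF hFG⟩

theorem bb_of_rbb {E F : NE Act} (h : rbb τ E F) : bb τ E F := by
  refine bb_of_bisim_up_to (R := fun X Y => (X = E ∧ Y = F) ∨ (X = F ∧ Y = E))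
    (fun _ _ h => h.symm.imp And.symm And.symm) ?_ (.inl ⟨rfl, rfl⟩)
  rintro X Y α X' (⟨rfl, rfl⟩ | ⟨rfl, rfl⟩) hs
  · obtain ⟨Y', hs', h'⟩ := h.1 α X' hs
    exact ⟨_, Y', ReflTransGen.refl, .inl hs', .inl (.inl ⟨rfl, rfl⟩), .inr h'⟩
  · obtain ⟨Y', hs', h'⟩ := h.2 α X' hs
    exact ⟨_, Y', ReflTransGen.refl, .inl hs', .inl (.inr ⟨rfl, rfl⟩), .inr (bb_symm h')⟩

theorem rbb_of_step_iff {E F : NE Act} (h : ∀ α X, step E α X ↔ step F α X) : rbb τ E F :=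
  ⟨fun α X hs => ⟨X, (h α X).1 hs, bb_refl X⟩, fun α X hs => ⟨X, (h α X).2 hs, bb_refl X⟩⟩

theorem rbb_pre_of_bb {E F : NE Act} (α : Act) (h : bb τ E F) :
    rbb τ (.pre α E) (.pre α F) :=
  ⟨fun _ _ hs => by cases hs; exact ⟨F, .pre α F, h⟩,
   fun _ _ hs => by cases hs; exact ⟨E, .pre α E, h⟩⟩

theorem rbb_plus_congr {E E' F F' : NE Act} (hE : rbb τ E E') (hF : rbb τ F F') :
    rbb τ (E.plus F) (E'.plus F') := by
  constructor
  · intro α X hs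
    rcases step_plus_iff.1 hs with hs | hs
    · obtain ⟨Y, hs', h⟩ := hE.1 α X hs; exact ⟨Y, .left hs', h⟩
    · obtain ⟨Y, hs', h⟩ := hF.1 α X hs; exact ⟨Y, .right hs', h⟩
  · intro α X hs
    rcases step_plus_iff.1 hs with hs | hs
    · obtain ⟨Y, hs', h⟩ := hE.2 α X hs; exact ⟨Y, .left hs', h⟩
    · obtain ⟨Y, hs', h⟩ := hF.2 α X hs; exact ⟨Y, .right hs', h⟩

theorem bb_plus_pre_tau (E F : NE Act) : bb τ (F.plus (.pre τ (E.plus F))) (E.plus F) := by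
  refine bb_of_bisim_up_to
    (R := fun X Y => (X = F.plus (.pre τ (E.plus F)) ∧ Y = E.plus F) ∨
      (X = E.plus F ∧ Y = F.plus (.pre τ (E.plus F))))
    (fun _ _ h => h.symm.imp And.symm And.symm) ?_ (.inl ⟨rfl, rfl⟩)
  rintro X Y α X' (⟨rfl, rfl⟩ | ⟨rfl, rfl⟩) hs
  · rcases step_plus_iff.1 hs with hs | hs
    · exact ⟨E.plus F, X', ReflTransGen.refl, .inl (.right hs), .inl (.inl ⟨rfl, rfl⟩),
        .inr (bb_refl X')⟩
    · cases hs
      exact ⟨E.plus F, E.plus F, ReflTransGen.refl, .inr ⟨rfl, rfl⟩, .inl (.inl ⟨rfl, rfl⟩),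
        .inr (bb_refl _)⟩
  · exact ⟨E.plus F, X', .single (.inl (.right (.pre τ (E.plus F)))), .inl hs,
      .inr (bb_refl _), .inr (bb_refl X')⟩

theorem rbb_of_AXb {E F : NE Act} (h : AXb τ E F) : rbb τ E F := by
  induction h with
  | refl E => exact rbb_refl E
  | symm _ ih => exact rbb_symm ih
  | trans _ _ ih₁ ih₂ => exact rbb_trans ih₁ ih₂
  | congPre α _ ih => exact rbb_pre_of_bb α (bb_of_rbb ih)
  | congPlusL _ ih => exact rbb_plus_congr ih (rbb_refl _)
  | congPlusR _ ih => exact rbb_plus_congr (rbb_refl _) ih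
  | A1 => exact rbb_of_step_iff fun _ _ => by simp only [step_plus_iff]; exact or_comm
  | A2 => exact rbb_of_step_iff fun _ _ => by simp only [step_plus_iff, or_assoc]
  | A3 => exact rbb_of_step_iff fun _ _ => by simp only [step_plus_iff, or_self]
  | A4 => exact rbb_of_step_iff fun _ _ => by simp only [step_plus_iff, not_step_zero, or_false]
  | B α E F => exact rbb_pre_of_bb α (bb_plus_pre_tau E F)

/-! ### Completeness -/

theorem exists_AXb_concrete_derivatives {G : NE Act}
    (h : ∀ β H, step G β H → ∃ K, Concrete τ K ∧ ∀ α, AXb τ (.pre α H) (.pre α K)) :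
    ∃ G', AXb τ G G' ∧ ∀ β K, step G' β K → Concrete τ K := by
  induction G with
  | zero => exact ⟨.zero, AXb.refl _, fun _ _ hs => nomatch hs⟩
  | pre β H =>
    obtain ⟨K, hK, hHK⟩ := h β H (.pre β H)
    exact ⟨.pre β K, hHK β, fun _ _ hs => by cases hs; exact hK⟩
  | plus G₁ G₂ ih₁ ih₂ =>
    obtain ⟨G₁', h₁, hc₁⟩ := ih₁ fun β H hs => h β H (.left hs)
    obtain ⟨G₂', h₂, hc₂⟩ := ih₂ fun β H hs => h β H (.right hs)
    refine ⟨G₁'.plus G₂', h₁.plus_congr h₂, fun β K hs => ?_⟩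
    rcases step_plus_iff.1 hs with hs | hs
    exacts [hc₁ β K hs, hc₂ β K hs]

theorem pre_AXb_of_inert_step {G K₀ : NE Act} (hG : ∀ β H, step G β H → Concrete τ H)
    (hs : step G τ K₀) (hb : bb τ G K₀) (α : Act) : AXb τ (.pre α G) (.pre α K₀) := by
  have hK₀ : Concrete τ K₀ := hG τ K₀ hs
  have hsummand : ∀ β H, step G β H →
      AXb τ (K₀.plus (.pre β H)) K₀ ∨ AXb τ (.pre β H) (.pre τ K₀) := by
    intro β H hsH
    obtain ⟨K₁, K₂, hw, ho, h₁, h₂⟩ := bb_step hb hsH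
    obtain rfl : K₁ = K₀ := hK₀.eq_of_wk hw (bb_trans (bb_symm hb) h₁)
    rcases ho with hsK | ⟨rfl, rfl⟩
    · exact .inl (AXb.absorb_of_step hsK ((hG β H hsH).AXb_of_bb (hK₀.of_step hsK) h₂))
    · exact .inr (AXb.congPre _ ((hG _ H hsH).AXb_of_bb hK₀ h₂))
  obtain ⟨S, hS, hGS⟩ := AXb.exists_split hsummand
  calc AXb τ (.pre α G) (.pre α (G.plus (.pre τ K₀))) :=
        AXb.congPre α (AXb.absorb_of_step hs (.refl _)).symm
    AXb τ _ (.pre α (S.plus (.pre τ (K₀.plus S)))) :=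
        AXb.congPre α (hGS.trans (AXb.congPlusR (AXb.congPre τ hS.symm)))
    AXb τ _ (.pre α (K₀.plus S)) := AXb.B α K₀ S
    AXb τ _ (.pre α K₀) := AXb.congPre α hS

theorem exists_concrete_pre_AXb (G : NE Act) :
    ∃ K, Concrete τ K ∧ ∀ α, AXb τ (.pre α G) (.pre α K) := by
  induction G using wellFounded_step.induction with
  | _ G ih =>
    obtain ⟨G', hGG', hG'⟩ := exists_AXb_concrete_derivatives fun β H hs => ih H ⟨β, hs⟩
    by_cases hroot : ∃ K, step G' τ K ∧ bb τ G' K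
    · obtain ⟨K, hs, hb⟩ := hroot
      exact ⟨K, hG' τ K hs, fun α =>
        (AXb.congPre α hGG').trans (pre_AXb_of_inert_step hG' hs hb α)⟩
    · simp only [not_exists, not_and] at hroot
      exact ⟨G', concrete_of_forall_step hG' hroot, fun α => AXb.congPre α hGG'⟩

theorem AXb.of_rbb_of_concrete_derivatives {E F : NE Act} (h : rbb τ E F)
    (hE : ∀ β H, step E β H → Concrete τ H) (hF : ∀ β H, step F β H → Concrete τ H) :
    AXb τ E F := by
  refine AXb.of_simulations (fun β H hs => ?_) (fun β H' hs' => ?_)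
  · obtain ⟨H', hs', hb⟩ := h.1 β H hs
    exact ⟨H', hs', (hE β H hs).AXb_of_bb (hF β H' hs') hb⟩
  · obtain ⟨H, hs, hb⟩ := h.2 β H' hs'
    exact ⟨H, hs, (hF β H' hs').AXb_of_bb (hE β H hs) (bb_symm hb)⟩

end

/-- Soundness and completeness of `AX^b` for rooted branching bisimilarity. -/
theorem statement11 {Act : Type} (τ : Act) (E F : NE Act) :
    rbb τ E F ↔ AXb τ E F := by
  refine ⟨fun h => ?_, rbb_of_AXb⟩
  obtain ⟨E', hE, hcE⟩ := exists_AXb_concrete_derivatives (G := E) fun _ H _ =>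
    exists_concrete_pre_AXb H
  obtain ⟨F', hF, hcF⟩ := exists_AXb_concrete_derivatives (G := F) fun _ H _ =>
    exists_concrete_pre_AXb H
  have h' : rbb τ E' F' := rbb_trans (rbb_symm (rbb_of_AXb hE)) (rbb_trans h (rbb_of_AXb hF))
  exact hE.trans ((AXb.of_rbb_of_concrete_derivatives h' hcE hcF).trans hF.symm)
end NDB
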